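/- Let t : ℤ → ℂ, let T_n be the n×n Toeplitz matrix whose (j,k) entry is t_{j-k}, and let Ĉ_n be the n×n circulant matrix whose (j,k) entry is ĉ_{(k-j) mod n}, where ĉ_0 = t_0 and ĉ_k = t_{-k} + t_{n-k} for 1 ≤ k ≤ n-1. Then ‖Ĉ_n − T_n‖_F² = ∑_{k=-(n-1)}^{n-1} |k|·|t_k|². -/

import Mathlib

/-- The `n × n` Toeplitz matrix with `(j,k)` entry `t_{j-k}`. -/
noncomputable def toeplitz (t : ℤ → ℂ) (n : ℕ) : Matrix (Fin n) (Fin n) ℂ :=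
  Matrix.of fun j k => t ((j : ℤ) - (k : ℤ))

/-- Top-row coefficients `ĉ_0 = t_0` and `ĉ_k = t_{-k} + t_{n-k}` for `1 ≤ k ≤ n-1`. -/
noncomputable def hatCoeff (t : ℤ → ℂ) (n : ℕ) (k : ℤ) : ℂ :=
  if k = 0 then t 0 else t (-k) + t ((n : ℤ) - k)

/-- The circulant matrix `Ĉ_n` with `(j,k)` entry `ĉ_{(k-j) mod n}`. -/
noncomputable def hatCirculant (t : ℤ → ℂ) (n : ℕ) : Matrix (Fin n) (Fin n) ℂ :=
  Matrix.of fun j k => hatCoeff t n (((k : ℤ) - (j : ℤ)) % (n : ℤ))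

/-- Frobenius norm of a complex matrix. -/
noncomputable def frobNorm {n : ℕ} (A : Matrix (Fin n) (Fin n) ℂ) : ℝ :=
  Real.sqrt (∑ j, ∑ k, ‖A j k‖ ^ 2)

/-! Above the diagonal, at offset `d = k - j ∈ (0, n)`, the circulant `Ĉ_n` carries
`t_{-d} + t_{n-d}`, so `Ĉ_n − T_n` has the entry `t_{n-d}` there; symmetrically it has
`t_{-n-d}` at offset `d ∈ (-n, 0)` and `0` on the diagonal. The offset `d` occurs `n - |d|`
times, and the involution `d ↦ sign(d)·n - d` of `(-n, n)` turns `n - |d|` into `|k|` for the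
new index `k`, giving `∑ |k| |t_k|²`. -/

open Finset

def wrapIndex (n : ℕ) (d : ℤ) : ℤ :=
  d.sign * n - d

section wrapIndex

variable {n : ℕ} {d : ℤ}

lemma wrapIndex_of_pos (h : 0 < d) : wrapIndex n d = n - d := by
  simp [wrapIndex, Int.sign_eq_one_of_pos h]

lemma wrapIndex_of_neg (h : d < 0) : wrapIndex n d = -n - d := by
  simp [wrapIndex, Int.sign_eq_neg_one_of_neg h]

@[simp]
lemma wrapIndex_zero : wrapIndex n 0 = 0 := by
  simp [wrapIndex]

lemma wrapIndex_mem_Icc (hd : d ∈ Icc (-(n : ℤ) + 1) (n - 1)) :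
    wrapIndex n d ∈ Icc (-(n : ℤ) + 1) (n - 1) := by
  rw [mem_Icc] at hd ⊢
  rcases lt_trichotomy d 0 with h | rfl | h
  · rw [wrapIndex_of_neg h]; omega
  · simp; omega
  · rw [wrapIndex_of_pos h]; omega

lemma wrapIndex_wrapIndex (hd : d ∈ Icc (-(n : ℤ) + 1) (n - 1)) :
    wrapIndex n (wrapIndex n d) = d := by
  rw [mem_Icc] at hd
  rcases lt_trichotomy d 0 with h | rfl | h
  · rw [wrapIndex_of_neg h, wrapIndex_of_neg (by omega)]; ring
  · simp
  · rw [wrapIndex_of_pos h, wrapIndex_of_pos (by omega)]; ring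

lemma natAbs_wrapIndex (hd : d ∈ Icc (-(n : ℤ) + 1) (n - 1)) (h0 : d ≠ 0) :
    (wrapIndex n d).natAbs = n - d.natAbs := by
  rw [mem_Icc] at hd
  rcases h0.lt_or_gt with h | h
  · rw [wrapIndex_of_neg h]; omega
  · rw [wrapIndex_of_pos h]; omega

lemma sum_Icc_comp_wrapIndex {M : Type*} [AddCommMonoid M] (f : ℤ → M) :
    ∑ d ∈ Icc (-(n : ℤ) + 1) (n - 1), f (wrapIndex n d) =
      ∑ d ∈ Icc (-(n : ℤ) + 1) (n - 1), f d :=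
  sum_nbij' (wrapIndex n) (wrapIndex n) (fun _ => wrapIndex_mem_Icc)
    (fun _ => wrapIndex_mem_Icc) (fun _ => wrapIndex_wrapIndex) (fun _ => wrapIndex_wrapIndex)
    (fun _ _ => rfl)

end wrapIndex

lemma card_filter_sub_eq (n : ℕ) (d : ℤ) :
    #{p : Fin n × Fin n | (p.2 : ℤ) - p.1 = d} = n - d.natAbs := by
  rw [← card_range (n - d.natAbs)]
  refine card_bij' (fun p _ => (p.1 : ℕ) - (-d).toNat)
    (fun i hi => (⟨i + (-d).toNat, by rw [mem_range] at hi; omega⟩,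
      ⟨i + d.toNat, by rw [mem_range] at hi; omega⟩)) ?_ ?_ ?_ ?_
  · intro p hp
    rw [mem_filter] at hp
    rw [mem_range]
    omega
  · intro i hi
    rw [mem_range] at hi
    simp only [mem_filter, mem_univ, true_and]
    omega
  · intro p hp
    rw [mem_filter] at hp
    have := p.1.isLt
    have := p.2.isLt
    ext <;> simp <;> omega
  · intro i _
    simp

lemma sum_sum_fin_sub_eq_sum_Icc {M : Type*} [AddCommMonoid M] (n : ℕ) (f : ℤ → M) :
    ∑ j : Fin n, ∑ k : Fin n, f (k - j) =
      ∑ d ∈ Icc (-(n : ℤ) + 1) (n - 1), (n - d.natAbs) • f d := by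
  rw [← Fintype.sum_prod_type', ← sum_fiberwise_of_maps_to (g := fun p => (p.2 : ℤ) - p.1)
    (t := Icc (-(n : ℤ) + 1) (n - 1))]
  · refine sum_congr rfl fun d _ => ?_
    rw [sum_congr rfl fun p hp => congrArg f (mem_filter.1 hp).2, sum_const, card_filter_sub_eq]
  · intro p _
    have := p.1.isLt
    have := p.2.isLt
    rw [mem_Icc]
    omega

lemma hatCoeff_emod_sub (t : ℤ → ℂ) {n : ℕ} {d : ℤ} (hd : d ∈ Icc (-(n : ℤ) + 1) (n - 1)) :
    hatCoeff t n (d % n) - t (-d) = if d = 0 then 0 else t (wrapIndex n d) := by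
  rw [mem_Icc] at hd
  rcases lt_trichotomy d 0 with h | rfl | h
  · have hmod : d % n = d + n := by
      rw [← Int.add_mul_emod_self_left d n 1, mul_one]
      exact Int.emod_eq_of_lt (by omega) (by omega)
    rw [hmod, hatCoeff, if_neg (by omega), if_neg h.ne, wrapIndex_of_neg h,
      show (n : ℤ) - (d + n) = -d by ring, show -(d + n) = -n - d by ring, add_sub_cancel_right]
  · simp [hatCoeff]
  · rw [Int.emod_eq_of_lt h.le (by omega), hatCoeff, if_neg h.ne', if_neg h.ne',
      wrapIndex_of_pos h, add_sub_cancel_left]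

lemma hatCirculant_sub_toeplitz_apply (t : ℤ → ℂ) {n : ℕ} (j k : Fin n) :
    (hatCirculant t n - toeplitz t n) j k =
      if (k : ℤ) - j = 0 then 0 else t (wrapIndex n (k - j)) := by
  have hd : (k : ℤ) - j ∈ Icc (-(n : ℤ) + 1) (n - 1) := by
    have := j.isLt
    have := k.isLt
    rw [mem_Icc]
    omega
  rw [Matrix.sub_apply, hatCirculant, toeplitz, Matrix.of_apply, Matrix.of_apply,
    ← neg_sub (k : ℤ), hatCoeff_emod_sub t hd]

/-- `‖Ĉ_n − T_n‖_F² = ∑_{k=-(n-1)}^{n-1} |k| |t_k|²`. -/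
theorem frobNorm_sq_hatCirculant_sub_toeplitz
    (t : ℤ → ℂ) (n : ℕ) :
    frobNorm (hatCirculant t n - toeplitz t n) ^ 2 =
      ∑ k ∈ Finset.Icc (-(n : ℤ) + 1) ((n : ℤ) - 1),
        |(k : ℝ)| * ‖t k‖ ^ 2 := by
  rw [frobNorm, Real.sq_sqrt (by positivity)]
  simp_rw [hatCirculant_sub_toeplitz_apply]
  rw [sum_sum_fin_sub_eq_sum_Icc n (fun d => ‖if d = 0 then 0 else t (wrapIndex n d)‖ ^ 2),
    ← sum_Icc_comp_wrapIndex (fun k : ℤ => |(k : ℝ)| * ‖t k‖ ^ 2)]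
  refine sum_congr rfl fun d hd => ?_
  by_cases h0 : d = 0
  · simp [h0]
  · rw [if_neg h0, nsmul_eq_mul, ← natAbs_wrapIndex hd h0, Nat.cast_natAbs, Int.cast_abs]
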